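/- arXiv:2103.07572 — 14 statements merged into one kernel-verified Lean document; each statement's English description precedes it below -/
import Mathlib

section
/- Let C be a category enriched in partial orders and f : A ⟶ B a morphism of C. The following are equivalent: (1) f is laxly weakly orthogonal to itself (f ⋔ f); (2) f is a left adjoint, i.e. there is f* : B ⟶ A with 𝟙 A ≤ f ≫ f* and f* ≫ f ≤ 𝟙 B; (3) f ⋔ g for every morphism g of C; (4) g ⋔ f for every morphism g of C. -/
open CategoryTheory

universe v u

variable {C : Type u} [Category.{v} C] [∀ X Y : C, PartialOrder (X ⟶ Y)]

/-- `C` is enriched in partial orders: composition is monotone in both arguments. -/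
def CompMono (C : Type u) [Category.{v} C] [∀ X Y : C, PartialOrder (X ⟶ Y)] : Prop :=
  ∀ ⦃X Y Z : C⦄ ⦃f f' : X ⟶ Y⦄ ⦃g g' : Y ⟶ Z⦄, f ≤ f' → g ≤ g' → f ≫ g ≤ f' ≫ g'

/-- `f` is laxly weakly orthogonal to `g`: every lax square `(u, v) : f → g`
admits a lax diagonal. -/
def LaxOrth {A B X Y : C} (f : A ⟶ B) (g : X ⟶ Y) : Prop :=
  ∀ (u : A ⟶ X) (v : B ⟶ Y), u ≫ g ≤ f ≫ v →
    ∃ d : B ⟶ X, u ≤ f ≫ d ∧ d ≫ g ≤ v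

/-- For a morphism `f` of an `Ord`-enriched category, the following are equivalent:
(1) `f ⋔ f`; (2) `f` is a left adjoint; (3) `f ⋔ g` for all `g`; (4) `g ⋔ f` for all `g`. -/
theorem stmt0 (mono : CompMono C) {A B : C} (f : A ⟶ B) :
    List.TFAE
      [LaxOrth f f,
       ∃ fs : B ⟶ A, 𝟙 A ≤ f ≫ fs ∧ fs ≫ f ≤ 𝟙 B,
       ∀ ⦃X Y : C⦄ (g : X ⟶ Y), LaxOrth f g,
       ∀ ⦃X Y : C⦄ (g : X ⟶ Y), LaxOrth g f] := by
  tfae_have 1 → 2 := by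
    intro h
    obtain ⟨d, hd1, hd2⟩ := h (𝟙 A) (𝟙 B) (by simp)
    exact ⟨d, by simpa using hd1, by simpa using hd2⟩
  tfae_have 2 → 3 := by
    rintro ⟨fs, h1, h2⟩ X Y g u v huv
    refine ⟨fs ≫ u, ?_, ?_⟩
    · calc u = 𝟙 A ≫ u := by simp
        _ ≤ (f ≫ fs) ≫ u := mono h1 le_rfl
        _ = f ≫ fs ≫ u := by simp
    · calc (fs ≫ u) ≫ g = fs ≫ u ≫ g := by simp
        _ ≤ fs ≫ f ≫ v := mono le_rfl huv
        _ = (fs ≫ f) ≫ v := by simp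
        _ ≤ 𝟙 B ≫ v := mono h2 le_rfl
        _ = v := by simp
  tfae_have 2 → 4 := by
    rintro ⟨fs, h1, h2⟩ X Y g u v huv
    refine ⟨v ≫ fs, ?_, ?_⟩
    · calc u = u ≫ 𝟙 A := by simp
        _ ≤ u ≫ f ≫ fs := mono le_rfl h1
        _ = (u ≫ f) ≫ fs := by simp
        _ ≤ (g ≫ v) ≫ fs := mono huv le_rfl
        _ = g ≫ v ≫ fs := by simp
    · calc (v ≫ fs) ≫ f = v ≫ fs ≫ f := by simp
        _ ≤ v ≫ 𝟙 B := mono le_rfl h2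
        _ = v := by simp
  tfae_have 3 → 1 := fun h => h f
  tfae_have 4 → 1 := fun h => h f
  tfae_finish
end

section
/- Let C be a category enriched in partial orders and (L, R) a lax weak prefactorisation system on C (i.e. R = L^⋔ and L = ^⋔R). Then L ∩ R is exactly the class of left adjoint morphisms of C: a morphism f lies in both L and R if and only if there is f* with 𝟙 ≤ f ≫ f* and f* ≫ f ≤ 𝟙. -/
open CategoryTheory

universe v u

variable {C : Type u} [Category.{v} C] [∀ X Y : C, PartialOrder (X ⟶ Y)]

/-- The right lax weak orthogonal complement `H^⋔`. -/
def rightCompl (H : MorphismProperty C) : MorphismProperty C :=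
  fun _ _ g => ∀ ⦃A B : C⦄ (f : A ⟶ B), H f → LaxOrth f g

/-- The left lax weak orthogonal complement `^⋔H`. -/
def leftCompl (H : MorphismProperty C) : MorphismProperty C :=
  fun _ _ f => ∀ ⦃X Y : C⦄ (g : X ⟶ Y), H g → LaxOrth f g

/-- For a lax weak prefactorisation system `(L, R)`, `L ∩ R` is exactly the class of
left adjoint morphisms. -/
theorem stmt4 (mono : CompMono C) (L R : MorphismProperty C)
    (h1 : R = rightCompl L) (h2 : L = leftCompl R)
    {A B : C} (f : A ⟶ B) :
    (L f ∧ R f) ↔ ∃ fs : B ⟶ A, 𝟙 A ≤ f ≫ fs ∧ fs ≫ f ≤ 𝟙 B := by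
  constructor
  · rintro ⟨hL, hR⟩
    have orth : LaxOrth f f := by
      subst h2; exact hL f hR
    obtain ⟨d, hd1, hd2⟩ := orth (𝟙 A) (𝟙 B)
      (by rw [Category.id_comp, Category.comp_id])
    exact ⟨d, hd1, hd2⟩
  · rintro ⟨fs, huc, hcu⟩
    constructor
    · rw [h2]
      intro X Y g _ u v hsq
      refine ⟨fs ≫ u, ?_, ?_⟩
      · calc u = 𝟙 A ≫ u := (Category.id_comp u).symm
          _ ≤ (f ≫ fs) ≫ u := mono huc le_rfl
          _ = f ≫ fs ≫ u := Category.assoc _ _ _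
      · calc (fs ≫ u) ≫ g = fs ≫ u ≫ g := Category.assoc _ _ _
          _ ≤ fs ≫ f ≫ v := mono le_rfl hsq
          _ = (fs ≫ f) ≫ v := (Category.assoc _ _ _).symm
          _ ≤ 𝟙 B ≫ v := mono hcu le_rfl
          _ = v := Category.id_comp v
    · rw [h1]
      intro X Y g _ u v hsq
      refine ⟨v ≫ fs, ?_, ?_⟩
      · calc u = u ≫ 𝟙 A := (Category.comp_id u).symm
          _ ≤ u ≫ f ≫ fs := mono le_rfl huc
          _ = (u ≫ f) ≫ fs := (Category.assoc _ _ _).symm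
          _ ≤ (g ≫ v) ≫ fs := mono hsq le_rfl
          _ = g ≫ v ≫ fs := Category.assoc _ _ _
      · calc (v ≫ fs) ≫ f = v ≫ fs ≫ f := Category.assoc _ _ _
          _ ≤ v ≫ 𝟙 B := mono le_rfl hcu
          _ = v := Category.comp_id v
end

section
/- Let C be a category enriched in partial orders carrying a lax functorial factorisation (K, L, R) and let f : A ⟶ B be any morphism. (i) If L(R f) ⋔ R f, then f ∈ L_F (i.e. f ⋔ R f) if and only if there exists a lax diagonal for η_f, i.e. some ρ : B ⟶ K f with L f ≤ f ≫ ρ and ρ ≫ R f ≤ 𝟙 B. (ii) If L f ⋔ R(L f), then f ∈ R_F (i.e. L f ⋔ f) if and only if there exists a lax diagonal for ε_f, i.e. some λ : K f ⟶ A with 𝟙 A ≤ L f ≫ λ and λ ≫ f ≤ R f. -/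
open CategoryTheory

universe v u

variable {C : Type u} [Category.{v} C] [∀ X Y : C, PartialOrder (X ⟶ Y)]

/-- A lax functorial factorisation on `C`. -/
structure LaxFunctorialFact (C : Type u) [Category.{v} C]
    [∀ X Y : C, PartialOrder (X ⟶ Y)] where
  K : ∀ {A B : C}, (A ⟶ B) → C
  L : ∀ {A B : C} (f : A ⟶ B), A ⟶ K f
  R : ∀ {A B : C} (f : A ⟶ B), K f ⟶ B
  fact : ∀ {A B : C} (f : A ⟶ B), f = L f ≫ R f
  Kmap : ∀ {A B X Y : C} (f : A ⟶ B) (g : X ⟶ Y) (u : A ⟶ X) (v : B ⟶ Y),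
    u ≫ g ≤ f ≫ v → (K f ⟶ K g)
  Kmap_L : ∀ {A B X Y : C} (f : A ⟶ B) (g : X ⟶ Y) (u : A ⟶ X) (v : B ⟶ Y)
    (sq : u ≫ g ≤ f ≫ v), u ≫ L g ≤ L f ≫ Kmap f g u v sq
  Kmap_R : ∀ {A B X Y : C} (f : A ⟶ B) (g : X ⟶ Y) (u : A ⟶ X) (v : B ⟶ Y)
    (sq : u ≫ g ≤ f ≫ v), Kmap f g u v sq ≫ R g ≤ R f ≫ v
  Kmap_id : ∀ {A B : C} (f : A ⟶ B) (sq : 𝟙 A ≫ f ≤ f ≫ 𝟙 B),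
    Kmap f f (𝟙 A) (𝟙 B) sq = 𝟙 (K f)
  Kmap_comp : ∀ {A B X Y P Q : C} (f : A ⟶ B) (g : X ⟶ Y) (h : P ⟶ Q)
    (u : A ⟶ X) (v : B ⟶ Y) (u' : X ⟶ P) (v' : Y ⟶ Q)
    (sq : u ≫ g ≤ f ≫ v) (sq' : u' ≫ h ≤ g ≫ v')
    (sq'' : (u ≫ u') ≫ h ≤ f ≫ (v ≫ v')),
    Kmap f h (u ≫ u') (v ≫ v') sq'' = Kmap f g u v sq ≫ Kmap g h u' v' sq'

/-- (i) If `L(R f) ⋔ R f`, then `f ⋔ R f` iff `η_f` has a lax diagonal.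
(ii) If `L f ⋔ R(L f)`, then `L f ⋔ f` iff `ε_f` has a lax diagonal. -/
theorem stmt5 (mono : CompMono C) (F : LaxFunctorialFact C)
    {A B : C} (f : A ⟶ B) :
    (LaxOrth (F.L (F.R f)) (F.R f) →
      (LaxOrth f (F.R f) ↔ ∃ ρ : B ⟶ F.K f, F.L f ≤ f ≫ ρ ∧ ρ ≫ F.R f ≤ 𝟙 B)) ∧
    (LaxOrth (F.L f) (F.R (F.L f)) →
      (LaxOrth (F.L f) f ↔ ∃ lam : F.K f ⟶ A, 𝟙 A ≤ F.L f ≫ lam ∧ lam ≫ f ≤ F.R f)) := by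
  constructor
  · intro hR
    constructor
    · intro hf
      exact hf (F.L f) (𝟙 B) (by rw [← F.fact f, Category.comp_id])
    · rintro ⟨ρ, hρ1, hρ2⟩ u v sq
      obtain ⟨s, hs1, hs2⟩ := hR (𝟙 (F.K f)) (F.R (F.R f))
        (by rw [Category.id_comp]; exact le_of_eq (F.fact (F.R f)))
      set k := F.Kmap f (F.R f) u v sq with hk
      refine ⟨ρ ≫ k ≫ s, ?_, ?_⟩
      · calc u = u ≫ 𝟙 (F.K f) := by rw [Category.comp_id]
          _ ≤ u ≫ F.L (F.R f) ≫ s := mono le_rfl hs1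
          _ = (u ≫ F.L (F.R f)) ≫ s := by rw [Category.assoc]
          _ ≤ (F.L f ≫ k) ≫ s := mono (F.Kmap_L f (F.R f) u v sq) le_rfl
          _ ≤ (f ≫ ρ ≫ k) ≫ s := by
              refine mono ?_ le_rfl
              calc F.L f ≫ k ≤ (f ≫ ρ) ≫ k := mono hρ1 le_rfl
                _ = f ≫ ρ ≫ k := by rw [Category.assoc]
          _ = f ≫ ρ ≫ k ≫ s := by simp [Category.assoc]
      · calc (ρ ≫ k ≫ s) ≫ F.R f = ρ ≫ k ≫ s ≫ F.R f := by simp [Category.assoc]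
          _ ≤ ρ ≫ k ≫ F.R (F.R f) := mono le_rfl (mono le_rfl hs2)
          _ = ρ ≫ (k ≫ F.R (F.R f)) := rfl
          _ ≤ ρ ≫ F.R f ≫ v := mono le_rfl (F.Kmap_R f (F.R f) u v sq)
          _ = (ρ ≫ F.R f) ≫ v := by rw [Category.assoc]
          _ ≤ 𝟙 B ≫ v := mono hρ2 le_rfl
          _ = v := Category.id_comp v
  · intro hL
    constructor
    · intro hf
      exact hf (𝟙 A) (F.R f) (by rw [← F.fact f, Category.id_comp])
    · rintro ⟨lam, hl1, hl2⟩ u v sq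
      obtain ⟨t, ht1, ht2⟩ := hL (F.L (F.L f)) (𝟙 (F.K f))
        (by rw [Category.comp_id]; exact le_of_eq (F.fact (F.L f)).symm)
      set k := F.Kmap (F.L f) f u v sq with hk
      refine ⟨t ≫ k ≫ lam, ?_, ?_⟩
      · calc u = u ≫ 𝟙 A := by rw [Category.comp_id]
          _ ≤ u ≫ F.L f ≫ lam := mono le_rfl hl1
          _ = (u ≫ F.L f) ≫ lam := by rw [Category.assoc]
          _ ≤ (F.L (F.L f) ≫ k) ≫ lam := mono (F.Kmap_L (F.L f) f u v sq) le_rfl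
          _ ≤ ((F.L f ≫ t) ≫ k) ≫ lam := mono (mono ht1 le_rfl) le_rfl
          _ = F.L f ≫ t ≫ k ≫ lam := by simp [Category.assoc]
      · calc (t ≫ k ≫ lam) ≫ f = t ≫ k ≫ lam ≫ f := by simp [Category.assoc]
          _ ≤ t ≫ k ≫ F.R f := mono le_rfl (mono le_rfl hl2)
          _ = t ≫ (k ≫ F.R f) := rfl
          _ ≤ t ≫ F.R (F.L f) ≫ v := mono le_rfl (F.Kmap_R (F.L f) f u v sq)
          _ = (t ≫ F.R (F.L f)) ≫ v := by rw [Category.assoc]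
          _ ≤ 𝟙 (F.K f) ≫ v := mono ht2 le_rfl
          _ = v := Category.id_comp v
end

section
/- Let C be a category enriched in partial orders carrying a predistributive lax functorial factorisation (K, L, R). Then L_F = {f | there exists a lax diagonal ρ for η_f} and R_F = {f | there exists a lax diagonal λ for ε_f}; that is, f ⋔ R f iff some ρ : B ⟶ K f satisfies L f ≤ f ≫ ρ and ρ ≫ R f ≤ 𝟙 B, and L f ⋔ f iff some λ : K f ⟶ A satisfies 𝟙 A ≤ L f ≫ λ and λ ≫ f ≤ R f. -/
open CategoryTheory

universe v u

variable {C : Type u} [Category.{v} C] [∀ X Y : C, PartialOrder (X ⟶ Y)]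

/-- The lax functorial factorisation is predistributive. -/
def Predistrib (F : LaxFunctorialFact C) : Prop :=
  ∀ {A B : C} (f : A ⟶ B), LaxOrth (F.L f) (F.R (F.L f)) ∧ LaxOrth (F.L (F.R f)) (F.R f)

/-- For a predistributive lax functorial factorisation, `L_F` is the class of morphisms
whose `η`-square has a lax diagonal and `R_F` is the class of morphisms whose
`ε`-square has a lax diagonal. -/
theorem stmt6 (mono : CompMono C) (F : LaxFunctorialFact C) (hp : Predistrib F)
    {A B : C} (f : A ⟶ B) :
    (LaxOrth f (F.R f) ↔ ∃ ρ : B ⟶ F.K f, F.L f ≤ f ≫ ρ ∧ ρ ≫ F.R f ≤ 𝟙 B) ∧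
    (LaxOrth (F.L f) f ↔ ∃ lam : F.K f ⟶ A, 𝟙 A ≤ F.L f ≫ lam ∧ lam ≫ f ≤ F.R f) := by
  constructor
  · constructor
    · intro h
      exact h (F.L f) (𝟙 B) (by rw [← F.fact]; simp)
    · rintro ⟨ρ, hρ1, hρ2⟩ u v sq
      obtain ⟨lam, hl1, hl2⟩ := (hp f).2 (𝟙 (F.K f)) (F.R (F.R f))
        (by rw [Category.id_comp, ← F.fact])
      refine ⟨ρ ≫ F.Kmap f (F.R f) u v sq ≫ lam, ?_, ?_⟩
      · calc u = u ≫ 𝟙 _ := by simp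
          _ ≤ u ≫ (F.L (F.R f) ≫ lam) := mono le_rfl hl1
          _ = (u ≫ F.L (F.R f)) ≫ lam := by simp
          _ ≤ (F.L f ≫ F.Kmap f (F.R f) u v sq) ≫ lam :=
              mono (F.Kmap_L f (F.R f) u v sq) le_rfl
          _ ≤ ((f ≫ ρ) ≫ F.Kmap f (F.R f) u v sq) ≫ lam :=
              mono (mono hρ1 le_rfl) le_rfl
          _ = f ≫ ρ ≫ F.Kmap f (F.R f) u v sq ≫ lam := by simp
      · calc (ρ ≫ F.Kmap f (F.R f) u v sq ≫ lam) ≫ F.R f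
            = ρ ≫ F.Kmap f (F.R f) u v sq ≫ (lam ≫ F.R f) := by simp
          _ ≤ ρ ≫ F.Kmap f (F.R f) u v sq ≫ F.R (F.R f) :=
              mono le_rfl (mono le_rfl hl2)
          _ = ρ ≫ (F.Kmap f (F.R f) u v sq ≫ F.R (F.R f)) := by simp
          _ ≤ ρ ≫ (F.R f ≫ v) := mono le_rfl (F.Kmap_R f (F.R f) u v sq)
          _ = (ρ ≫ F.R f) ≫ v := by simp
          _ ≤ 𝟙 _ ≫ v := mono hρ2 le_rfl
          _ = v := by simp
  · constructor
    · intro h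
      exact h (𝟙 A) (F.R f) (by rw [Category.id_comp, ← F.fact])
    · rintro ⟨lam, hl1, hl2⟩ u v sq
      obtain ⟨ρ, hρ1, hρ2⟩ := (hp f).1 (F.L (F.L f)) (𝟙 (F.K f))
        (by rw [← F.fact]; simp)
      refine ⟨ρ ≫ F.Kmap (F.L f) f u v sq ≫ lam, ?_, ?_⟩
      · calc u = u ≫ 𝟙 _ := by simp
          _ ≤ u ≫ (F.L f ≫ lam) := mono le_rfl hl1
          _ = (u ≫ F.L f) ≫ lam := by simp
          _ ≤ (F.L (F.L f) ≫ F.Kmap (F.L f) f u v sq) ≫ lam :=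
              mono (F.Kmap_L (F.L f) f u v sq) le_rfl
          _ ≤ ((F.L f ≫ ρ) ≫ F.Kmap (F.L f) f u v sq) ≫ lam :=
              mono (mono hρ1 le_rfl) le_rfl
          _ = F.L f ≫ ρ ≫ F.Kmap (F.L f) f u v sq ≫ lam := by simp
      · calc (ρ ≫ F.Kmap (F.L f) f u v sq ≫ lam) ≫ f
            = ρ ≫ F.Kmap (F.L f) f u v sq ≫ (lam ≫ f) := by simp
          _ ≤ ρ ≫ F.Kmap (F.L f) f u v sq ≫ F.R f :=
              mono le_rfl (mono le_rfl hl2)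
          _ = ρ ≫ (F.Kmap (F.L f) f u v sq ≫ F.R f) := by simp
          _ ≤ ρ ≫ (F.R (F.L f) ≫ v) := mono le_rfl (F.Kmap_R (F.L f) f u v sq)
          _ = (ρ ≫ F.R (F.L f)) ≫ v := by simp
          _ ≤ 𝟙 _ ≫ v := mono hρ2 le_rfl
          _ = v := by simp
end

section
/- Let C be a category enriched in partial orders, f : A ⟶ B, and suppose f = l ≫ r for some l : A ⟶ K and r : K ⟶ B. If there exist ρ : B ⟶ K with l ≤ f ≫ ρ and ρ ≫ r ≤ 𝟙 B, and λ : K ⟶ A with 𝟙 A ≤ l ≫ λ and λ ≫ f ≤ r, then ρ ≫ λ : B ⟶ A is a right adjoint of f, i.e. 𝟙 A ≤ f ≫ (ρ ≫ λ) and (ρ ≫ λ) ≫ f ≤ 𝟙 B. -/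
open CategoryTheory

universe v u

variable {C : Type u} [Category.{v} C] [∀ X Y : C, PartialOrder (X ⟶ Y)]

/-- If `f = l ≫ r` admits lax diagonals `ρ` for `η` and `λ` for `ε`, then
`ρ ≫ λ` is a right adjoint of `f`. -/
theorem stmt7 (mono : CompMono C) {A W B : C} (f : A ⟶ B) (l : A ⟶ W) (r : W ⟶ B)
    (hf : f = l ≫ r)
    (ρ : B ⟶ W) (hρ1 : l ≤ f ≫ ρ) (hρ2 : ρ ≫ r ≤ 𝟙 B)
    (lam : W ⟶ A) (hl1 : 𝟙 A ≤ l ≫ lam) (hl2 : lam ≫ f ≤ r) :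
    𝟙 A ≤ f ≫ (ρ ≫ lam) ∧ (ρ ≫ lam) ≫ f ≤ 𝟙 B := by
  constructor
  · calc 𝟙 A ≤ l ≫ lam := hl1
      _ ≤ (f ≫ ρ) ≫ lam := mono hρ1 le_rfl
      _ = f ≫ (ρ ≫ lam) := Category.assoc ..
  · calc (ρ ≫ lam) ≫ f = ρ ≫ (lam ≫ f) := Category.assoc ..
      _ ≤ ρ ≫ r := mono le_rfl hl2
      _ ≤ 𝟙 B := hρ2
end

section
/- Let C be a category enriched in partial orders carrying a predistributive lax functorial factorisation (K, L, R). Then (L_F, R_F) is a lax weak factorisation system: (i) for every morphism f, L f ∈ L_F and R f ∈ R_F, so f = L f ≫ R f is an (L_F, R_F)-factorisation; (ii) f ⋔ g for every f ∈ L_F and g ∈ R_F; (iii) R_F = (L_F)^⋔ and L_F = ^⋔(R_F). -/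
open CategoryTheory

universe v u

variable {C : Type u} [Category.{v} C] [∀ X Y : C, PartialOrder (X ⟶ Y)]

/-- `L_F = {f | f ⋔ R f}`. -/
def LF (F : LaxFunctorialFact C) : MorphismProperty C := fun _ _ f => LaxOrth f (F.R f)

/-- `R_F = {f | L f ⋔ f}`. -/
def RF (F : LaxFunctorialFact C) : MorphismProperty C := fun _ _ f => LaxOrth (F.L f) f

/-- For a predistributive lax functorial factorisation, `(L_F, R_F)` is a lax weak
factorisation system. -/
theorem stmt8 (mono : CompMono C) (F : LaxFunctorialFact C) (hp : Predistrib F) :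
    (∀ {A B : C} (f : A ⟶ B), f = F.L f ≫ F.R f ∧ LF F (F.L f) ∧ RF F (F.R f)) ∧
    (∀ {A B X Y : C} (f : A ⟶ B) (g : X ⟶ Y), LF F f → RF F g → LaxOrth f g) ∧
    RF F = rightCompl (LF F) ∧ LF F = leftCompl (RF F) := by
  have main : ∀ {A B X Y : C} (f : A ⟶ B) (g : X ⟶ Y), LF F f → RF F g → LaxOrth f g := by
    intro A B X Y f g hf hg u v sq
    obtain ⟨s, hs1, hs2⟩ := hf (F.L f) (𝟙 B) (by rw [Category.comp_id, ← F.fact])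
    obtain ⟨p, hp1, hp2⟩ := hg (𝟙 X) (F.R g) (by rw [Category.id_comp, ← F.fact])
    refine ⟨s ≫ F.Kmap f g u v sq ≫ p, ?_, ?_⟩
    · calc u = u ≫ 𝟙 X := by simp
        _ ≤ u ≫ F.L g ≫ p := mono le_rfl hp1
        _ = (u ≫ F.L g) ≫ p := by simp
        _ ≤ (F.L f ≫ F.Kmap f g u v sq) ≫ p := mono (F.Kmap_L f g u v sq) le_rfl
        _ ≤ ((f ≫ s) ≫ F.Kmap f g u v sq) ≫ p := mono (mono hs1 le_rfl) le_rfl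
        _ = f ≫ s ≫ F.Kmap f g u v sq ≫ p := by simp
    · calc (s ≫ F.Kmap f g u v sq ≫ p) ≫ g
          = s ≫ F.Kmap f g u v sq ≫ (p ≫ g) := by simp
        _ ≤ s ≫ F.Kmap f g u v sq ≫ F.R g := mono le_rfl (mono le_rfl hp2)
        _ = s ≫ (F.Kmap f g u v sq ≫ F.R g) := by simp
        _ ≤ s ≫ (F.R f ≫ v) := mono le_rfl (F.Kmap_R f g u v sq)
        _ = (s ≫ F.R f) ≫ v := by simp
        _ ≤ 𝟙 B ≫ v := mono hs2 le_rfl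
        _ = v := by simp
  refine ⟨fun f => ⟨F.fact f, (hp f).1, (hp f).2⟩, main, ?_, ?_⟩
  · funext X Y g
    ext
    exact ⟨fun hg A B f hf => main f g hf hg, fun h => h (F.L g) (hp g).1⟩
  · funext A B f
    ext
    exact ⟨fun hf X Y g hg => main f g hf hg, fun h => h (F.R f) (hp f).2⟩
end

section
/- Let C be a category enriched in partial orders carrying a lax functorial factorisation (K, L, R), and let (L, R) be any lax weak prefactorisation system on C (R = L^⋔ and L = ^⋔R) such that L f ∈ L and R f ∈ R for every morphism f. Then L = L_F and R = R_F, where L_F := {f | f ⋔ R f} and R_F := {f | L f ⋔ f}. -/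
open CategoryTheory

universe v u

variable {C : Type u} [Category.{v} C] [∀ X Y : C, PartialOrder (X ⟶ Y)]

/-- Any lax weak prefactorisation system `(L, R)` with `L f ∈ L` and `R f ∈ R` for all `f`
coincides with `(L_F, R_F)`. -/
theorem stmt9 (mono : CompMono C) (F : LaxFunctorialFact C)
    (L R : MorphismProperty C)
    (h1 : R = rightCompl L) (h2 : L = leftCompl R)
    (hL : ∀ {A B : C} (f : A ⟶ B), L (F.L f))
    (hR : ∀ {A B : C} (f : A ⟶ B), R (F.R f)) :
    L = LF F ∧ R = RF F := by

  constructor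
  · funext X Y; ext f
    constructor
    · intro hf
      have hr : rightCompl L (F.R f) := h1 ▸ hR f
      exact hr f hf
    · intro hf
      rw [h2]
      intro X' Y' g hg u v sq
      -- get the retract diagonal s from f ⋔ R f
      obtain ⟨s, hs1, hs2⟩ := hf (F.L f) (𝟙 _)
        (by rw [← F.fact f, Category.comp_id])
      have hg' : rightCompl L g := h1 ▸ hg
      obtain ⟨d', hd1, hd2⟩ := hg' (F.L f) (hL f) u (F.R f ≫ v)
        (by rw [← Category.assoc, ← F.fact f]; exact sq)
      refine ⟨s ≫ d', ?_, ?_⟩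
      · calc u ≤ F.L f ≫ d' := hd1
          _ ≤ (f ≫ s) ≫ d' := mono hs1 le_rfl
          _ = f ≫ s ≫ d' := Category.assoc _ _ _
      · calc (s ≫ d') ≫ g = s ≫ d' ≫ g := Category.assoc _ _ _
          _ ≤ s ≫ F.R f ≫ v := mono le_rfl hd2
          _ = (s ≫ F.R f) ≫ v := (Category.assoc _ _ _).symm
          _ ≤ 𝟙 _ ≫ v := mono hs2 le_rfl
          _ = v := Category.id_comp v
  · funext X Y; ext f
    constructor
    · intro hf
      have hr : rightCompl L f := h1 ▸ hf
      exact hr (F.L f) (hL f)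
    · intro hf
      rw [h1]
      intro X' Y' g hg u v sq
      obtain ⟨p, hp1, hp2⟩ := hf (𝟙 _) (F.R f)
        (by rw [← F.fact f, Category.id_comp])
      have hrf : rightCompl L (F.R f) := h1 ▸ hR f
      obtain ⟨d', hd1, hd2⟩ := hrf g hg (u ≫ F.L f) v
        (by rw [Category.assoc, ← F.fact f]; exact sq)
      refine ⟨d' ≫ p, ?_, ?_⟩
      · calc u = u ≫ 𝟙 _ := (Category.comp_id u).symm
          _ ≤ u ≫ F.L f ≫ p := mono le_rfl hp1
          _ = (u ≫ F.L f) ≫ p := (Category.assoc _ _ _).symm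
          _ ≤ (g ≫ d') ≫ p := mono hd1 le_rfl
          _ = g ≫ d' ≫ p := Category.assoc _ _ _
      · calc (d' ≫ p) ≫ f = d' ≫ p ≫ f := Category.assoc _ _ _
          _ ≤ d' ≫ F.R f := mono le_rfl hp2
          _ ≤ v := hd2
end

section
/- Let C be a category enriched in partial orders carrying a lax functorial factorisation (K, L, R). Suppose that for every morphism f : A ⟶ B there are morphisms θ_f : K(R f) ⟶ K f with 𝟙 (K f) ≤ L(R f) ≫ θ_f and θ_f ≫ R f ≤ R(R f) (a lax diagonal for ε_{R f}, coming from the unit law of a lax monad structure on R), and ω_f : K f ⟶ K(L f) with L(L f) ≤ L f ≫ ω_f and ω_f ≫ R(L f) ≤ 𝟙 (K f) (a lax diagonal for η_{L f}, coming from the counit law of a lax comonad structure on L). Then the factorisation is predistributive: L f ⋔ R(L f) and L(R f) ⋔ R f for every f; in particular it is a lax functorial weak factorisation system. -/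
open CategoryTheory

universe v u

variable {C : Type u} [Category.{v} C] [∀ X Y : C, PartialOrder (X ⟶ Y)]

/-- A lax functorial factorisation equipped with lax (co)monad-style structure maps
`θ` and `ω` is predistributive: `L f ⋔ R(L f)` and `L(R f) ⋔ R f` for every `f`. -/
theorem stmt10 (mono : CompMono C) (F : LaxFunctorialFact C)
    (θ : ∀ {A B : C} (f : A ⟶ B), F.K (F.R f) ⟶ F.K f)
    (hθ1 : ∀ {A B : C} (f : A ⟶ B), 𝟙 (F.K f) ≤ F.L (F.R f) ≫ θ f)
    (hθ2 : ∀ {A B : C} (f : A ⟶ B), θ f ≫ F.R f ≤ F.R (F.R f))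
    (ω : ∀ {A B : C} (f : A ⟶ B), F.K f ⟶ F.K (F.L f))
    (hω1 : ∀ {A B : C} (f : A ⟶ B), F.L (F.L f) ≤ F.L f ≫ ω f)
    (hω2 : ∀ {A B : C} (f : A ⟶ B), ω f ≫ F.R (F.L f) ≤ 𝟙 (F.K f)) :
    ∀ {A B : C} (f : A ⟶ B),
      LaxOrth (F.L f) (F.R (F.L f)) ∧ LaxOrth (F.L (F.R f)) (F.R f) := by
  intro A B f
  constructor
  · intro u v sq
    refine ⟨ω f ≫ F.Kmap (F.L f) (F.R (F.L f)) u v sq ≫ θ (F.L f), ?_, ?_⟩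
    · calc u = u ≫ 𝟙 _ := (Category.comp_id u).symm
        _ ≤ u ≫ (F.L (F.R (F.L f)) ≫ θ (F.L f)) := mono le_rfl (hθ1 (F.L f))
        _ = (u ≫ F.L (F.R (F.L f))) ≫ θ (F.L f) := by simp
        _ ≤ (F.L (F.L f) ≫ F.Kmap (F.L f) (F.R (F.L f)) u v sq) ≫ θ (F.L f) :=
            mono (F.Kmap_L _ _ _ _ sq) le_rfl
        _ ≤ ((F.L f ≫ ω f) ≫ F.Kmap (F.L f) (F.R (F.L f)) u v sq) ≫ θ (F.L f) :=
            mono (mono (hω1 f) le_rfl) le_rfl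
        _ = F.L f ≫ ω f ≫ F.Kmap (F.L f) (F.R (F.L f)) u v sq ≫ θ (F.L f) := by simp
    · calc (ω f ≫ F.Kmap (F.L f) (F.R (F.L f)) u v sq ≫ θ (F.L f)) ≫ F.R (F.L f)
          = ω f ≫ F.Kmap (F.L f) (F.R (F.L f)) u v sq ≫ (θ (F.L f) ≫ F.R (F.L f)) := by simp
        _ ≤ ω f ≫ F.Kmap (F.L f) (F.R (F.L f)) u v sq ≫ F.R (F.R (F.L f)) :=
            mono le_rfl (mono le_rfl (hθ2 (F.L f)))
        _ ≤ ω f ≫ F.R (F.L f) ≫ v := mono le_rfl (F.Kmap_R _ _ _ _ sq)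
        _ = (ω f ≫ F.R (F.L f)) ≫ v := by simp
        _ ≤ 𝟙 _ ≫ v := mono (hω2 f) le_rfl
        _ = v := Category.id_comp v
  · intro u v sq
    refine ⟨ω (F.R f) ≫ F.Kmap (F.L (F.R f)) (F.R f) u v sq ≫ θ f, ?_, ?_⟩
    · calc u = u ≫ 𝟙 _ := (Category.comp_id u).symm
        _ ≤ u ≫ (F.L (F.R f) ≫ θ f) := mono le_rfl (hθ1 f)
        _ = (u ≫ F.L (F.R f)) ≫ θ f := by simp
        _ ≤ (F.L (F.L (F.R f)) ≫ F.Kmap (F.L (F.R f)) (F.R f) u v sq) ≫ θ f :=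
            mono (F.Kmap_L _ _ _ _ sq) le_rfl
        _ ≤ ((F.L (F.R f) ≫ ω (F.R f)) ≫ F.Kmap (F.L (F.R f)) (F.R f) u v sq) ≫ θ f :=
            mono (mono (hω1 (F.R f)) le_rfl) le_rfl
        _ = F.L (F.R f) ≫ ω (F.R f) ≫ F.Kmap (F.L (F.R f)) (F.R f) u v sq ≫ θ f := by simp
    · calc (ω (F.R f) ≫ F.Kmap (F.L (F.R f)) (F.R f) u v sq ≫ θ f) ≫ F.R f
          = ω (F.R f) ≫ F.Kmap (F.L (F.R f)) (F.R f) u v sq ≫ (θ f ≫ F.R f) := by simp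
        _ ≤ ω (F.R f) ≫ F.Kmap (F.L (F.R f)) (F.R f) u v sq ≫ F.R (F.R f) :=
            mono le_rfl (mono le_rfl (hθ2 f))
        _ ≤ ω (F.R f) ≫ F.R (F.L (F.R f)) ≫ v := mono le_rfl (F.Kmap_R _ _ _ _ sq)
        _ = (ω (F.R f) ≫ F.R (F.L (F.R f))) ≫ v := by simp
        _ ≤ 𝟙 _ ≫ v := mono (hω2 (F.R f)) le_rfl
        _ = v := Category.id_comp v
end

section
/- For partial functions f : α →. β and g : β →. α with the pointwise refinement order, the pair (f, g) is an adjunction f ⊣ g (i.e. PFun.id α ≤ g.comp f and f.comp g ≤ PFun.id β) if and only if there exists a function φ : α → β such that f = PFun.lift φ and, for all a : α and b : β, a ∈ g b ↔ φ a = b. (In particular f is total, φ is injective, and g is the partial inverse of φ defined exactly on the range of φ.) -/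
universe u

/-- `f ≤ g` pointwise: every value of `f a` is a value of `g a`. -/
def PFunLE {α β : Type u} (f g : α →. β) : Prop := ∀ a, f a ≤ g a

/-- `f` is total: defined everywhere. -/
def PFun.Total {α β : Type u} (f : α →. β) : Prop := ∀ a, (f a).Dom

/-- `f` is injective on its domain. -/
def PFun.InjOnDom {α β : Type u} (f : α →. β) : Prop :=
  ∀ ⦃a a' : α⦄ ⦃b : β⦄, b ∈ f a → b ∈ f a' → a = a'

namespace PFun

variable {α β : Type u}

theorem id_le_comp_iff (f : α →. β) (g : β →. α) :
    PFunLE (PFun.id α) (g.comp f) ↔ ∀ a, ∃ b ∈ f a, a ∈ g b :=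
  forall_congr' fun a => by
    change (∀ x, x ∈ Part.some a → x ∈ (f a).bind g) ↔ _
    simp only [Part.mem_some_iff, forall_eq]
    exact Part.mem_bind_iff

theorem comp_le_id_iff (f : α →. β) (g : β →. α) :
    PFunLE (f.comp g) (PFun.id β) ↔ ∀ b a c, a ∈ g b → c ∈ f a → c = b :=
  forall_congr' fun b => by
    change (∀ c, c ∈ (g b).bind f → c ∈ Part.some b) ↔ _
    simp only [Part.mem_bind_iff (g := f), Part.mem_some_iff, forall_exists_index, and_imp]
    exact forall_comm

end PFun

/-- `f ⊣ g` for partial functions iff `f = PFun.lift φ` for some `φ` with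
`a ∈ g b ↔ φ a = b`. -/
theorem stmt11 {α β : Type u} (f : α →. β) (g : β →. α) :
    (PFunLE (PFun.id α) (g.comp f) ∧ PFunLE (f.comp g) (PFun.id β)) ↔
      ∃ φ : α → β, f = PFun.lift φ ∧ ∀ (a : α) (b : β), a ∈ g b ↔ φ a = b := by
  rw [PFun.id_le_comp_iff, PFun.comp_le_id_iff]
  constructor
  · rintro ⟨unit, counit⟩
    choose φ hφf hφg using unit
    -- a `Part` has at most one value, so the witness `φ a ∈ f a` already pins down `f a`
    refine ⟨φ, funext fun a => Part.eq_some_iff.2 (hφf a), fun a b => ⟨fun hab => ?_, ?_⟩⟩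
    · exact counit b a (φ a) hab (hφf a)
    · rintro rfl
      exact hφg a
  · rintro ⟨φ, rfl, hg⟩
    refine ⟨fun a => ⟨φ a, Part.mem_some _, (hg a _).2 rfl⟩, fun b a c hab hc => ?_⟩
    rw [Part.mem_some_iff.1 hc, (hg a b).1 hab]
end

section
/- Consider partial functions with the pointwise refinement order. (i) For every f : α →. β, setting D := {a : α // (f a).Dom}, L f : α →. D the partial function defined exactly on the domain of f sending a to ⟨a, h⟩, and R f : D →. β the total function sending ⟨a, h⟩ to (f a).get h, one has f = (R f).comp (L f), L f is injective on its domain, and R f is total. (ii) Every partial function that is injective on its domain is laxly weakly orthogonal to every total partial function: for f : α →. β injective on its domain, g : γ →. δ total, and every lax square g.comp u ≤ v.comp f there exists d : β →. γ with u ≤ d.comp f and g.comp d ≤ v. -/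
universe u

/-- `f` is laxly weakly orthogonal to `g`: every lax square `(u, v) : f → g`
(`g.comp u ≤ v.comp f`) admits a lax diagonal. -/
def PFun.LaxOrthP {α β γ δ : Type u} (f : α →. β) (g : γ →. δ) : Prop :=
  ∀ (u : α →. γ) (v : β →. δ), PFunLE (g.comp u) (v.comp f) →
    ∃ d : β →. γ, PFunLE u (d.comp f) ∧ PFunLE (g.comp d) v

/-- The left factor of the domain-total factorisation: defined exactly on the domain
of `f`, sending `a` to `⟨a, h⟩`. -/
def PFun.domL {α β : Type u} (f : α →. β) : α →. {a : α // (f a).Dom} :=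
  fun a => ⟨(f a).Dom, fun h => ⟨a, h⟩⟩

/-- The right factor of the domain-total factorisation: the total function sending
`⟨a, h⟩` to `(f a).get h`. -/
def PFun.domR {α β : Type u} (f : α →. β) : {a : α // (f a).Dom} →. β :=
  fun p => Part.some ((f p.1).get p.2)


/-! The factorisation (i) is immediate. For (ii), a function `f` injective on its domain lets
us transport `u : α →. γ` along `f`: the diagonal `d` sends `b ∈ f a` to `u a`, the preimage `a`
being unique. In a lax square with `g` total, `u a` is defined only where `f a` is, which gives
`u ≤ d ∘ f`; and `g ∘ d ≤ v` is the square itself, read at the preimage. -/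

theorem PFunLE.dom_of_dom {α β : Type u} {f g : α →. β} (h : PFunLE f g) {a : α}
    (ha : (f a).Dom) : (g a).Dom :=
  Part.dom_iff_mem.2 ⟨_, h a _ (Part.get_mem ha)⟩

namespace PFun

variable {α β γ δ : Type u}

theorem mem_comp_iff {f : β →. γ} {g : α →. β} {a : α} {c : γ} :
    c ∈ f.comp g a ↔ ∃ b ∈ g a, c ∈ f b :=
  Part.mem_bind_iff

theorem dom_of_dom_comp {f : β →. γ} {g : α →. β} {a : α} (h : (f.comp g a).Dom) :
    (g a).Dom :=
  h.1

theorem Total.dom_comp {f : β →. γ} (hf : f.Total) {g : α →. β} {a : α} (h : (g a).Dom) :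
    (f.comp g a).Dom :=
  ⟨h, hf _⟩

theorem mem_domL_iff {f : α →. β} {a : α} {p : {a : α // (f a).Dom}} :
    p ∈ f.domL a ↔ p.1 = a := by
  constructor
  · rintro ⟨_, rfl⟩
    rfl
  · rintro rfl
    exact ⟨p.2, rfl⟩

theorem domR_comp_domL (f : α →. β) : f.domR.comp f.domL = f := by
  ext a b
  simp only [mem_comp_iff, mem_domL_iff, domR, Part.mem_some_iff]
  constructor
  · rintro ⟨p, rfl, rfl⟩
    exact Part.get_mem p.2
  · intro hb
    exact ⟨⟨a, hb.1⟩, rfl, (Part.get_eq_of_mem hb _).symm⟩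

theorem injOnDom_domL (f : α →. β) : f.domL.InjOnDom := fun _ _ _ ha ha' =>
  (mem_domL_iff.1 ha).symm.trans (mem_domL_iff.1 ha')

theorem total_domR (f : α →. β) : f.domR.Total := fun _ => trivial

noncomputable def extend (f : α →. β) (u : α →. γ) : β →. γ :=
  fun b => ⟨∃ a, b ∈ f a ∧ (u a).Dom, fun h => (u h.choose).get h.choose_spec.2⟩

theorem mem_extend_iff {f : α →. β} (hf : f.InjOnDom) {u : α →. γ} {b : β} {c : γ} :
    c ∈ f.extend u b ↔ ∃ a, b ∈ f a ∧ c ∈ u a := by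
  constructor
  · rintro ⟨h, rfl⟩
    exact ⟨h.choose, h.choose_spec.1, Part.get_mem _⟩
  · rintro ⟨a, hb, hc⟩
    have h : ∃ a, b ∈ f a ∧ (u a).Dom := ⟨a, hb, Part.dom_iff_mem.2 ⟨c, hc⟩⟩
    refine ⟨h, ?_⟩
    obtain rfl : h.choose = a := hf h.choose_spec.1 hb
    exact Part.get_eq_of_mem hc _

theorem le_extend_comp {f : α →. β} (hf : f.InjOnDom) {u : α →. γ}
    (hu : ∀ a, (u a).Dom → (f a).Dom) : PFunLE u ((f.extend u).comp f) := by
  intro a c hc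
  obtain ⟨b, hb⟩ := Part.dom_iff_mem.1 (hu a (Part.dom_iff_mem.2 ⟨c, hc⟩))
  exact mem_comp_iff.2 ⟨b, hb, (mem_extend_iff hf).2 ⟨a, hb, hc⟩⟩

theorem comp_extend_le {f : α →. β} (hf : f.InjOnDom) {u : α →. γ} {g : γ →. δ}
    {v : β →. δ} (hsq : PFunLE (g.comp u) (v.comp f)) : PFunLE (g.comp (f.extend u)) v := by
  intro b e he
  obtain ⟨c, hc, he⟩ := mem_comp_iff.1 he
  obtain ⟨a, hb, hc⟩ := (mem_extend_iff hf).1 hc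
  obtain ⟨b', hb', he⟩ := mem_comp_iff.1 (hsq a e (mem_comp_iff.2 ⟨c, hc, he⟩))
  rwa [Part.mem_unique hb hb']

theorem InjOnDom.laxOrthP {f : α →. β} (hf : f.InjOnDom) {g : γ →. δ} (hg : g.Total) :
    f.LaxOrthP g := fun u _ hsq =>
  ⟨f.extend u,
    le_extend_comp hf fun _ hu => dom_of_dom_comp (hsq.dom_of_dom (hg.dom_comp hu)),
    comp_extend_le hf hsq⟩

end PFun

/-- (i) Every partial function factors as a domain restriction followed by a total map;
(ii) every partial function injective on its domain is laxly weakly orthogonal to every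
total partial function. -/
theorem stmt12 :
    (∀ {α β : Type u} (f : α →. β),
      f = (f.domR).comp f.domL ∧ PFun.InjOnDom f.domL ∧ PFun.Total f.domR) ∧
    (∀ {α β γ δ : Type u} (f : α →. β) (g : γ →. δ),
      PFun.InjOnDom f → PFun.Total g → PFun.LaxOrthP f g) :=
  ⟨fun f => ⟨f.domR_comp_domL.symm, f.injOnDom_domL, f.total_domR⟩,
    fun _ _ hf hg => hf.laxOrthP hg⟩
end

section
/- Consider partial functions with the pointwise refinement order. (i) A partial function f : α →. β is laxly weakly orthogonal to every total partial function (with arbitrary source and target) if and only if f is injective on its domain. (ii) A partial function g : γ →. δ is such that every partial function that is injective on its domain is laxly weakly orthogonal to g if and only if g is total. Hence (injective-on-domain, total) is a lax weak factorisation system on partial functions. -/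
universe u

namespace PFun

variable {α β γ δ : Type u}

theorem total_coe (f : α → β) : PFun.Total (f : α →. β) := fun _ => trivial

theorem injOnDom_none : PFun.InjOnDom (fun _ => Part.none : α →. β) :=
  fun _ _ _ h => (Part.notMem_none _ h).elim

theorem injOnDom_toSubtype (p : β → Prop) {f : α → β} (hf : Function.Injective f) :
    PFun.InjOnDom (toSubtype p f) := by
  intro a a' b hb hb'
  rw [mem_toSubtype_iff] at hb hb'
  exact hf (hb.symm.trans hb')

theorem asSubtype_comp_toSubtype_dom (f : α →. β) :
    (f.asSubtype : f.Dom →. β).comp (toSubtype (· ∈ f.Dom) id) = f := by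
  ext a b
  simp only [mem_comp_iff, mem_toSubtype_iff, coe_val, Part.mem_some_iff]
  constructor
  · rintro ⟨x, rfl, rfl⟩
    exact Part.get_mem _
  · intro hb
    have ha : a ∈ f.Dom := (mem_dom f a).2 ⟨b, hb⟩
    exact ⟨⟨a, ha⟩, rfl, (asSubtype_eq_of_mem hb ha).symm⟩

noncomputable def invFun (f : α →. β) : β →. α := fun b => ⟨∃ a, b ∈ f a, fun h => h.choose⟩

theorem mem_of_mem_invFun {f : α →. β} {a : α} {b : β} (h : a ∈ f.invFun b) : b ∈ f a := by
  obtain ⟨hb, rfl⟩ := h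
  exact hb.choose_spec

theorem InjOnDom.mem_invFun {f : α →. β} (hf : f.InjOnDom) {a : α} {b : β} (h : b ∈ f a) :
    a ∈ f.invFun b :=
  ⟨⟨a, h⟩, hf (Exists.choose_spec (⟨a, h⟩ : ∃ a, b ∈ f a)) h⟩

/-- The lax square `(res id f.Dom, const) : f → const` has a lax diagonal `d` only if
`d b` contains every preimage of `b`. -/
theorem injOnDom_of_laxOrthP_toPUnit {f : α →. β}
    (h : f.LaxOrthP (PFun.lift fun _ : α => PUnit.unit.{u + 1})) : f.InjOnDom := by
  have hsq : PFunLE ((PFun.lift fun _ : α => PUnit.unit.{u + 1}).comp (res id f.Dom))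
      ((PFun.lift fun _ : β => PUnit.unit.{u + 1}).comp f) := by
    intro a e he
    obtain ⟨x, hx, -⟩ := mem_comp_iff.1 he
    obtain ⟨b, hb⟩ := (mem_dom f a).1 ((mem_res _ _ _ _).1 hx).1
    exact mem_comp_iff.2 ⟨b, hb, Part.mem_some_iff.2 (Subsingleton.elim _ _)⟩
  obtain ⟨d, hd, -⟩ := h _ _ hsq
  have mem_d : ∀ {a b}, b ∈ f a → a ∈ d b := fun {a b} hb => by
    obtain ⟨b₀, hb₀, had⟩ :=
      mem_comp_iff.1 (hd a a ((mem_res _ _ _ _).2 ⟨(mem_dom f a).2 ⟨b, hb⟩, rfl⟩))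
    rwa [Part.mem_unique hb₀ hb] at had
  exact fun a a' b hb hb' => Part.mem_unique (mem_d hb) (mem_d hb')

/-- If `g c` is undefined, `(const c, ⊥)` is a lax square from the empty partial function
to `g`, and it has no lax diagonal. -/
theorem total_of_laxOrthP_none {g : γ →. δ}
    (h : PFun.LaxOrthP (fun _ => Part.none : PUnit.{u + 1} →. PUnit.{u + 1}) g) : g.Total := by
  intro c
  by_contra hc
  have hsq : PFunLE (g.comp fun _ : PUnit.{u + 1} => Part.some c)
      (PFun.comp (fun _ => Part.none : PUnit.{u + 1} →. δ) (fun _ => Part.none)) := by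
    intro _ e he
    obtain ⟨c', hc', hec⟩ := mem_comp_iff.1 he
    rw [Part.mem_some_iff.1 hc'] at hec
    exact (hc (Part.dom_iff_mem.2 ⟨e, hec⟩)).elim
  obtain ⟨d, hd, -⟩ := h _ _ hsq
  obtain ⟨b, hb, -⟩ := mem_comp_iff.1 (hd PUnit.unit c (Part.mem_some c))
  exact Part.notMem_none b hb

end PFun

/-- `(injective-on-domain, total)` is a lax weak factorisation system on partial
functions. -/
theorem stmt13 :
    (∀ {α β : Type u} (f : α →. β),
      (∀ {γ δ : Type u} (g : γ →. δ), PFun.Total g → PFun.LaxOrthP f g) ↔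
        PFun.InjOnDom f) ∧
    (∀ {γ δ : Type u} (g : γ →. δ),
      (∀ {α β : Type u} (f : α →. β), PFun.InjOnDom f → PFun.LaxOrthP f g) ↔
        PFun.Total g) ∧
    (∀ {α β : Type u} (f : α →. β), ∃ (κ : Type u) (l : α →. κ) (r : κ →. β),
      f = r.comp l ∧ PFun.InjOnDom l ∧ PFun.Total r) :=
  ⟨fun _ => ⟨fun h => PFun.injOnDom_of_laxOrthP_toPUnit (h _ (PFun.total_coe _)),
      fun hf _ _ _ hg => hf.laxOrthP hg⟩,
    fun _ => ⟨fun h => PFun.total_of_laxOrthP_none (h _ PFun.injOnDom_none),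
      fun hg _ _ _ hf => hf.laxOrthP hg⟩,
    fun f => ⟨f.Dom, _, _, (PFun.asSubtype_comp_toSubtype_dom f).symm,
      PFun.injOnDom_toSubtype _ Function.injective_id, PFun.total_coe _⟩⟩
end

section
/- Consider partial functions with the pointwise refinement order, and let E := {f | PFun.ran f = Set.univ} (surjective partial functions) and M := {f | f is injective on its domain}. Then (E, M) is an oplax weak factorisation system: (i) every f ∈ E is oplaxly weakly orthogonal to every g ∈ M; (ii) every f : α →. β factors as f = m.comp e with e ∈ E and m ∈ M (take e : α →. {b : β // b ∈ PFun.ran f} the corestriction of f to its range and m the total inclusion of the range into β); (iii) f ∈ E if and only if f is oplaxly weakly orthogonal to every member of M, and g ∈ M if and only if every member of E is oplaxly weakly orthogonal to g. -/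
universe u

/-- `f` is oplaxly weakly orthogonal to `g`: every oplax square `(u, v) : f → g`
(`v.comp f ≤ g.comp u`) admits an oplax diagonal. -/
def PFun.OplaxOrthP {α β γ δ : Type u} (f : α →. β) (g : γ →. δ) : Prop :=
  ∀ (u : α →. γ) (v : β →. δ), PFunLE (v.comp f) (g.comp u) →
    ∃ d : β →. γ, PFunLE (d.comp f) u ∧ PFunLE v (g.comp d)

/-! Given an oplax square `(u, v)` from a surjective `f` to a `g` injective on its domain,
`g⁻¹ ∘ v` is a diagonal: by surjectivity and the square, each value `w ∈ v b` lies in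
some `g c` with `c ∈ u a` and `b ∈ f a`, and injectivity makes `c` unique.
Conversely, orthogonality to the nowhere defined map forces `f` to be surjective, and
orthogonality of the surjection `{c, c'} → 1` to `g` forces `c = c'` whenever `g c` and
`g c'` share a value. -/

namespace PFun

variable {α β γ δ : Type u}

noncomputable def partialInv (g : γ →. δ) : δ →. γ :=
  fun w => ⟨∃ c, w ∈ g c, fun h => h.choose⟩

theorem mem_of_mem_partialInv {g : γ →. δ} {c : γ} {w : δ} (h : c ∈ g.partialInv w) :
    w ∈ g c := by
  obtain ⟨hw, rfl⟩ := h
  exact hw.choose_spec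

theorem InjOnDom.mem_partialInv {g : γ →. δ} (hg : g.InjOnDom) {c : γ} {w : δ}
    (h : w ∈ g c) : c ∈ g.partialInv w :=
  ⟨⟨c, h⟩, hg (mem_of_mem_partialInv (Part.get_mem _)) h⟩

theorem oplaxOrthP_of_ran_eq_univ {f : α →. β} {g : γ →. δ} (hf : f.ran = Set.univ)
    (hg : g.InjOnDom) : f.OplaxOrthP g := by
  intro u v hsq
  refine ⟨g.partialInv.comp v, fun a c hc => ?_, fun b w hw => ?_⟩
  · obtain ⟨b, hb, hc⟩ := mem_comp_iff.1 hc
    obtain ⟨w, hw, hc⟩ := mem_comp_iff.1 hc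
    obtain ⟨c', hc', hwc'⟩ := mem_comp_iff.1 (hsq a w (mem_comp_iff.2 ⟨b, hb, hw⟩))
    rwa [hg (mem_of_mem_partialInv hc) hwc']
  · obtain ⟨a, hb⟩ : b ∈ f.ran := hf ▸ Set.mem_univ b
    obtain ⟨c, -, hwc⟩ := mem_comp_iff.1 (hsq a w (mem_comp_iff.2 ⟨b, hb, hw⟩))
    exact mem_comp_iff.2 ⟨c, mem_comp_iff.2 ⟨w, hw, hg.mem_partialInv hwc⟩, hwc⟩

def ranFactorization (f : α →. β) : α →. f.ran :=
  fun a => ⟨(f a).Dom, fun h => ⟨(f a).get h, a, Part.get_mem h⟩⟩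

theorem mem_ranFactorization_iff {f : α →. β} {a : α} {k : f.ran} :
    k ∈ f.ranFactorization a ↔ (k : β) ∈ f a := by
  rw [ranFactorization, Part.mem_mk_iff]
  constructor
  · rintro ⟨h, rfl⟩
    exact Part.get_mem h
  · intro h
    exact ⟨Part.dom_iff_mem.2 ⟨_, h⟩, Subtype.ext (Part.get_eq_of_mem h _)⟩

theorem ran_ranFactorization (f : α →. β) : f.ranFactorization.ran = Set.univ :=
  Set.eq_univ_of_forall fun ⟨_, a, hb⟩ => ⟨a, mem_ranFactorization_iff.2 hb⟩

theorem lift_val_comp_ranFactorization (f : α →. β) :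
    ((Subtype.val : f.ran → β) : f.ran →. β).comp f.ranFactorization = f := by
  ext a b
  rw [mem_comp_iff]
  constructor
  · rintro ⟨k, hk, hb⟩
    rw [coe_val, Part.mem_some_iff] at hb
    exact hb ▸ mem_ranFactorization_iff.1 hk
  · intro hb
    exact ⟨⟨b, a, hb⟩, mem_ranFactorization_iff.2 hb, Part.mem_some _⟩

theorem injOnDom_lift {f : α → β} (hf : Function.Injective f) : (f : α →. β).InjOnDom :=
  fun _ _ _ ha ha' => hf ((Part.mem_some_iff.1 ha).symm.trans (Part.mem_some_iff.1 ha'))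

theorem total_lift (f : α → β) : (f : α →. β).Total :=
  fun _ => trivial

theorem injOnDom_none_s17 : InjOnDom (fun _ => Part.none : γ →. δ) :=
  fun _ _ _ h => (Part.notMem_none _ h).elim

theorem ran_eq_univ_of_oplaxOrthP_none {f : α →. β} (x : δ)
    (h : f.OplaxOrthP (fun _ => Part.none : γ →. δ)) : f.ran = Set.univ := by
  obtain ⟨d, -, hd⟩ := h (fun _ => Part.none) (res (fun _ => x) f.ranᶜ) fun a w hw => by
    obtain ⟨b, hb, hw⟩ := mem_comp_iff.1 hw
    exact ((mem_res _ _ _ _).1 hw).1 ⟨a, hb⟩ |>.elim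
  refine Set.eq_univ_of_forall fun b => by_contra fun hb => ?_
  obtain ⟨_, -, hnone⟩ := mem_comp_iff.1 (hd b _ ((mem_res _ _ _ _).2 ⟨hb, rfl⟩))
  exact Part.notMem_none _ hnone

theorem ran_res_pair (c c' : γ) : (res (fun _ => PUnit.unit.{u + 1}) {c, c'}).ran = Set.univ :=
  Set.eq_univ_of_forall fun _ => ⟨c, (mem_res _ _ _ _).2 ⟨Set.mem_insert c _, rfl⟩⟩

theorem eq_of_oplaxOrthP_res_pair {g : γ →. δ} {c c' : γ} {w : δ} (hc : w ∈ g c)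
    (hc' : w ∈ g c') (h : (res (fun _ => PUnit.unit.{u + 1}) {c, c'}).OplaxOrthP g) :
    c = c' := by
  obtain ⟨d, hd, hv⟩ := h (PFun.id γ) (fun _ => Part.some w) fun a x hx => by
    obtain ⟨_, ha, hx⟩ := mem_comp_iff.1 hx
    obtain rfl := Part.mem_some_iff.1 hx
    rcases ((mem_res _ _ _ _).1 ha).1 with rfl | rfl
    exacts [mem_comp_iff.2 ⟨_, Part.mem_some _, hc⟩, mem_comp_iff.2 ⟨_, Part.mem_some _, hc'⟩]
  obtain ⟨c₀, hc₀, -⟩ := mem_comp_iff.1 (hv PUnit.unit w (Part.mem_some w))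
  have hd_at : ∀ a ∈ ({c, c'} : Set γ), c₀ = a := fun a ha =>
    Part.mem_some_iff.1 (hd a c₀ (mem_comp_iff.2 ⟨_, (mem_res _ _ _ _).2 ⟨ha, rfl⟩, hc₀⟩))
  exact (hd_at c (Set.mem_insert c _)).symm.trans (hd_at c' (Set.mem_insert_of_mem c rfl))

end PFun

/-- `(surjective, injective-on-domain)` is an oplax weak factorisation system on
partial functions. -/
theorem stmt17 :
    (∀ {α β γ δ : Type u} (f : α →. β) (g : γ →. δ),
      PFun.ran f = Set.univ → PFun.InjOnDom g → PFun.OplaxOrthP f g) ∧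
    (∀ {α β : Type u} (f : α →. β), ∃ (κ : Type u) (e : α →. κ) (m : κ →. β),
      f = m.comp e ∧ PFun.ran e = Set.univ ∧ PFun.InjOnDom m ∧ PFun.Total m) ∧
    (∀ {α β : Type u} (f : α →. β),
      PFun.ran f = Set.univ ↔
        ∀ {γ δ : Type u} (g : γ →. δ), PFun.InjOnDom g → PFun.OplaxOrthP f g) ∧
    (∀ {γ δ : Type u} (g : γ →. δ),
      PFun.InjOnDom g ↔
        ∀ {α β : Type u} (f : α →. β), PFun.ran f = Set.univ → PFun.OplaxOrthP f g) := by
  refine ⟨fun _ _ hf hg => PFun.oplaxOrthP_of_ran_eq_univ hf hg, fun f => ?_,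
    fun f => ⟨fun hf _ _ _ hg => PFun.oplaxOrthP_of_ran_eq_univ hf hg, fun h => ?_⟩,
    fun g => ⟨fun hg _ _ _ hf => PFun.oplaxOrthP_of_ran_eq_univ hf hg, fun h => ?_⟩⟩
  · exact ⟨f.ran, f.ranFactorization, (Subtype.val : f.ran → _),
      (PFun.lift_val_comp_ranFactorization f).symm, PFun.ran_ranFactorization f,
      PFun.injOnDom_lift Subtype.val_injective, PFun.total_lift _⟩
  · exact PFun.ran_eq_univ_of_oplaxOrthP_none PUnit.unit
      (h (fun _ => Part.none : PUnit →. PUnit) PFun.injOnDom_none_s17)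
  · exact fun c c' _ hc hc' =>
      PFun.eq_of_oplaxOrthP_res_pair hc hc' (h _ (PFun.ran_res_pair c c'))
end

section
/- Consider partial functions with the pointwise refinement order. Let l : α →. β and r : γ →. δ be total partial functions such that l is oplaxly weakly orthogonal to r. Then for all total u : α →. γ and total v : β →. δ with v.comp l = r.comp u, there exists a total d : β →. γ with d.comp l = u and r.comp d = v. (Oplax weak orthogonality restricts to strict weak orthogonality on total maps.) -/
universe u

/-! A refinement of a total map is the map itself. So an oplax diagonal `d` of a strict square
of total maps is total (as `v ≤ r ∘ d`), and then both of its oplax triangles are equalities. -/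

theorem Part.eq_of_le_of_dom {α : Type*} {o p : Part α} (h : o ≤ p) (ho : o.Dom) : o = p := by
  obtain ⟨a, ha⟩ := Part.dom_iff_mem.mp ho
  rw [Part.eq_some_iff.mpr ha, Part.eq_some_iff.mpr (h a ha)]

theorem PFunLE.eq_of_total {α β : Type u} {f g : α →. β}
    (h : PFunLE f g) (hf : PFun.Total f) : f = g :=
  funext fun a => Part.eq_of_le_of_dom (h a) (hf a)

theorem PFunLE.of_eq {α β : Type u} {f g : α →. β} (h : f = g) : PFunLE f g :=
  fun _ => h ▸ le_rfl

theorem PFun.Total.comp {α β γ : Type u} {f : β →. γ} {g : α →. β}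
    (hf : PFun.Total f) (hg : PFun.Total g) : PFun.Total (f.comp g) :=
  fun a => Part.bind_dom.mpr ⟨hg a, hf _⟩

theorem PFun.Total.of_comp {α β γ : Type u} {f : β →. γ} {g : α →. β}
    (h : PFun.Total (f.comp g)) : PFun.Total g :=
  fun a => (Part.bind_dom.mp (h a)).1

theorem PFun.Total.of_le {α β : Type u} {f g : α →. β} (hf : PFun.Total f)
    (h : PFunLE f g) : PFun.Total g := by
  rwa [← h.eq_of_total hf]

theorem stmt18_general {α β γ δ : Type u} (l : α →. β) (r : γ →. δ)
    (hl : PFun.Total l) (horth : PFun.OplaxOrthP l r)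
    (u : α →. γ) (v : β →. δ) (hv : PFun.Total v)
    (hsq : v.comp l = r.comp u) :
    ∃ d : β →. γ, PFun.Total d ∧ d.comp l = u ∧ r.comp d = v := by
  obtain ⟨d, hdl, hv_rd⟩ := horth u v (.of_eq hsq)
  have hd : PFun.Total d := (hv.of_le hv_rd).of_comp
  exact ⟨d, hd, hdl.eq_of_total (hd.comp hl), (hv_rd.eq_of_total hv).symm⟩

/-- Oplax weak orthogonality restricts to strict weak orthogonality on total maps. -/
theorem stmt18 {α β γ δ : Type u} (l : α →. β) (r : γ →. δ)
    (hl : PFun.Total l) (hr : PFun.Total r) (horth : PFun.OplaxOrthP l r)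
    (u : α →. γ) (v : β →. δ) (hu : PFun.Total u) (hv : PFun.Total v)
    (hsq : v.comp l = r.comp u) :
    ∃ d : β →. γ, PFun.Total d ∧ d.comp l = u ∧ r.comp d = v :=
  stmt18_general l r hl horth u v hv hsq
end

section
/- Consider partial functions with the pointwise refinement order, and let (L, R) be an oplax weak factorisation system on partial functions: L and R are classes of partial functions (predicates on f : α →. β for all types α, β) such that L = {f | f is oplaxly weakly orthogonal to every g ∈ R}, R = {g | every f ∈ L is oplaxly weakly orthogonal to g}, and every partial function f admits a factorisation f = r.comp l with l ∈ L and r ∈ R. Then every total partial function f : α →. β admits an (L, R)-factorisation f = r'.comp l' in which both l' ∈ L and r' ∈ R are total. -/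
/-!
Factor `f = r ∘ l` with `l ∈ L`, `r ∈ R`, and shrink the middle object to the domain
`D = {k | (r k).Dom}` of `r`, through the projection `p : κ ⇀ D` and the inclusion `i : D → κ`.
Since `p ∘ i = id` and `i ∘ p ≤ id`, oplax squares and their diagonals can be transported
along `(p, i)`, so `p ∘ l` is still in `L` and `r ∘ i` is still in `R`. Now `r ∘ i` is total
by construction, and `p ∘ l` has the same domain as `r ∘ l = f`.
-/

universe u

theorem PFun.mem_comp_iff_s19 {α β γ : Type u} {f : β →. γ} {g : α →. β} {a : α} {c : γ} :
    c ∈ f.comp g a ↔ ∃ b ∈ g a, c ∈ f b := Part.mem_bind_iff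

namespace PFunLE

variable {α β γ : Type u}

theorem trans {f g h : α →. β} (hfg : PFunLE f g) (hgh : PFunLE g h) : PFunLE f h :=
  fun a => (hfg a).trans (hgh a)

instance : @Trans (α →. β) (α →. β) (α →. β) PFunLE PFunLE PFunLE := ⟨trans⟩

theorem comp_left (f : β →. γ) {g g' : α →. β} (h : PFunLE g g') :
    PFunLE (f.comp g) (f.comp g') := fun a c hc => by
  obtain ⟨b, hb, hc⟩ := PFun.mem_comp_iff_s19.1 hc
  exact PFun.mem_comp_iff_s19.2 ⟨b, h a b hb, hc⟩

theorem comp_right {f f' : β →. γ} (h : PFunLE f f') (g : α →. β) :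
    PFunLE (f.comp g) (f'.comp g) := fun a c hc => by
  obtain ⟨b, hb, hc⟩ := PFun.mem_comp_iff_s19.1 hc
  exact PFun.mem_comp_iff_s19.2 ⟨b, hb, h b c hc⟩

end PFunLE

namespace PFun

variable {α β β' γ δ : Type u}

theorem OplaxOrthP.retraction_comp {l : α →. β} {g : γ →. δ} (h : OplaxOrthP l g)
    {p : β →. β'} {i : β' →. β} (hpi : p.comp i = PFun.id β')
    (hip : PFunLE (i.comp p) (PFun.id β)) : OplaxOrthP (p.comp l) g := by
  intro u v hsq
  obtain ⟨d, hdl, hv⟩ := h u (v.comp p) (by rwa [comp_assoc])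
  refine ⟨d.comp i, ?_, ?_⟩
  · calc (d.comp i).comp (p.comp l) = d.comp ((i.comp p).comp l) := by simp only [comp_assoc]
      PFunLE _ (d.comp ((PFun.id β).comp l)) := (hip.comp_right l).comp_left d
      _ = d.comp l := by rw [id_comp]
      PFunLE _ u := hdl
  · calc v = (v.comp p).comp i := by rw [comp_assoc, hpi, comp_id]
      PFunLE _ ((g.comp d).comp i) := hv.comp_right i
      _ = g.comp (d.comp i) := comp_assoc ..

theorem OplaxOrthP.comp_section {f : α →. β} {r : γ →. δ} (h : OplaxOrthP f r)
    {p : γ →. β'} {i : β' →. γ} (hpi : p.comp i = PFun.id β') (hr : (r.comp i).comp p = r) :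
    OplaxOrthP f (r.comp i) := by
  intro u v hsq
  obtain ⟨d, hdf, hv⟩ := h (i.comp u) v (by rwa [← comp_assoc])
  refine ⟨p.comp d, ?_, ?_⟩
  · calc (p.comp d).comp f = p.comp (d.comp f) := comp_assoc ..
      PFunLE _ (p.comp (i.comp u)) := hdf.comp_left p
      _ = u := by rw [← comp_assoc, hpi, id_comp]
  · calc PFunLE v (r.comp d) := hv
      _ = (r.comp i).comp (p.comp d) := by rw [← comp_assoc, hr]

theorem toSubtype_id_comp_lift_val (p : α → Prop) :
    (toSubtype p id).comp (PFun.lift (Subtype.val : Subtype p → α)) = PFun.id (Subtype p) := by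
  ext c b
  simp only [mem_comp_iff_s19, coe_val, Part.mem_some_iff, mem_toSubtype_iff, id_apply, id_eq,
    exists_eq_left, Subtype.ext_iff, eq_comm]

theorem lift_val_comp_toSubtype_id_le (p : α → Prop) :
    PFunLE ((PFun.lift (Subtype.val : Subtype p → α)).comp (toSubtype p id)) (PFun.id α) := by
  intro a b hb
  simp only [mem_comp_iff_s19, coe_val, Part.mem_some_iff, mem_toSubtype_iff, id_eq] at hb
  obtain ⟨c, hc, rfl⟩ := hb
  rw [hc]
  exact Part.mem_some _

theorem comp_lift_val_comp_toSubtype_dom (r : α →. β) :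
    ((r.comp (PFun.lift Subtype.val)).comp (toSubtype (fun a => (r a).Dom) id)) = r := by
  ext a b
  simp only [mem_comp_iff_s19, coe_val, Part.mem_some_iff, mem_toSubtype_iff, id_eq]
  constructor
  · rintro ⟨c, rfl, _, rfl, hb⟩
    exact hb
  · intro hb
    exact ⟨⟨a, Part.dom_iff_mem.2 ⟨b, hb⟩⟩, rfl, a, rfl, hb⟩

theorem Total.toSubtype_dom_comp {r : β →. γ} {l : α →. β} (h : (r.comp l).Total) :
    ((toSubtype (fun b => (r b).Dom) id).comp l).Total := h

theorem total_comp_lift_val (r : α →. β) :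
    (r.comp (PFun.lift (Subtype.val : {a // (r a).Dom} → α))).Total :=
  fun a => Part.bind_dom.2 ⟨trivial, a.2⟩

end PFun

/-- For an oplax weak factorisation system `(L, R)` on partial functions, every total
partial function admits an `(L, R)`-factorisation by total maps. -/
theorem stmt19
    (L R : ∀ {α β : Type u}, (α →. β) → Prop)
    (hL : ∀ {α β : Type u} (f : α →. β),
      L f ↔ ∀ {γ δ : Type u} (g : γ →. δ), R g → PFun.OplaxOrthP f g)
    (hR : ∀ {γ δ : Type u} (g : γ →. δ),
      R g ↔ ∀ {α β : Type u} (f : α →. β), L f → PFun.OplaxOrthP f g)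
    (hfact : ∀ {α β : Type u} (f : α →. β),
      ∃ (κ : Type u) (l : α →. κ) (r : κ →. β), f = r.comp l ∧ L l ∧ R r)
    {α β : Type u} (f : α →. β) (hf : PFun.Total f) :
    ∃ (κ : Type u) (l : α →. κ) (r : κ →. β),
      f = r.comp l ∧ L l ∧ R r ∧ PFun.Total l ∧ PFun.Total r := by
  obtain ⟨κ, l, r, rfl, hl, hr⟩ := hfact f
  let p := PFun.toSubtype (fun k => (r k).Dom) id
  let i := PFun.lift (Subtype.val : {k // (r k).Dom} → κ)
  have hpi : p.comp i = PFun.id _ := PFun.toSubtype_id_comp_lift_val _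
  have hr_eq : (r.comp i).comp p = r := PFun.comp_lift_val_comp_toSubtype_dom r
  refine ⟨_, p.comp l, r.comp i, ?_, ?_, ?_, hf.toSubtype_dom_comp, PFun.total_comp_lift_val r⟩
  · rw [← PFun.comp_assoc, hr_eq]
  · exact (hL _).2 fun g hg =>
      ((hL l).1 hl g hg).retraction_comp hpi (PFun.lift_val_comp_toSubtype_id_le _)
  · exact (hR _).2 fun f' hf' => ((hR r).1 hr f' hf').comp_section hpi hr_eq
end
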